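/- arXiv:1001.3817 — 8 statements merged into one kernel-verified Lean document; each statement's English description precedes it below -/
import Mathlib

section
/- Let g ⊆ gl(n,ℝ) be a linear subspace of real n×n matrices and let g_ℂ = {A + iB : A, B ∈ g} ⊆ gl(n,ℂ) be its complexification. For every k ≥ 0, if the k-th prolongation (g_ℂ)^{(k)} (over ℂ) is nonzero, then the k-th prolongation g^{(k)} (over ℝ) is nonzero. More precisely, if T is a nonzero element of (g_ℂ)^{(k)} and ι : ℝⁿ ↪ ℂⁿ is the standard inclusion, then at least one of the real symmetric multilinear maps (Re T)∘ι^{k+1} or (Im T)∘ι^{k+1} : (ℝⁿ)^{k+1} → ℝⁿ is a nonzero element of g^{(k)}. -/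
/-- A multilinear map `(𝕜ⁿ)^m → 𝕜ⁿ` is symmetric if it is invariant under permutation
of its arguments. -/
def MIsSymm {𝕜 : Type*} [Field 𝕜] {n m : ℕ}
    (T : MultilinearMap 𝕜 (fun _ : Fin m => (Fin n → 𝕜)) (Fin n → 𝕜)) : Prop :=
  ∀ (σ : Equiv.Perm (Fin m)) (v : Fin m → Fin n → 𝕜), (T fun i => v (σ i)) = T v

/-- Membership of a symmetric multilinear map `T : (𝕜ⁿ)^{k+1} → 𝕜ⁿ` in the `k`-th
Singer–Sternberg prolongation of a set `g` of `n × n` matrices over `𝕜`. -/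
def MInProl {𝕜 : Type*} [Field 𝕜] {n : ℕ} (g : Set (Matrix (Fin n) (Fin n) 𝕜)) (k : ℕ)
    (T : MultilinearMap 𝕜 (fun _ : Fin (k + 1) => (Fin n → 𝕜)) (Fin n → 𝕜)) : Prop :=
  MIsSymm T ∧
    ∀ w : Fin k → Fin n → 𝕜, ∃ M ∈ g, ∀ v : Fin n → 𝕜, M.mulVec v = T (Fin.snoc w v)

/-- The complexification `g_ℂ = {A + iB : A, B ∈ g}` of a set of real matrices. -/
def complexify {n : ℕ} (g : Set (Matrix (Fin n) (Fin n) ℝ)) :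
    Set (Matrix (Fin n) (Fin n) ℂ) :=
  {M | ∃ A ∈ g, ∃ B ∈ g,
    M = A.map (Complex.ofReal ·) + Complex.I • B.map (Complex.ofReal ·)}

noncomputable def reMap {n k : ℕ}
    (S : MultilinearMap ℂ (fun _ : Fin (k + 1) => (Fin n → ℂ)) (Fin n → ℂ)) :
    MultilinearMap ℝ (fun _ : Fin (k + 1) => (Fin n → ℝ)) (Fin n → ℝ) :=
  (Complex.reLm.compLeft (Fin n)).compMultilinearMap
    ((S.restrictScalars ℝ).compLinearMap
      (fun _ => LinearMap.compLeft Complex.ofRealAm.toLinearMap (Fin n)))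

noncomputable def imMap {n k : ℕ}
    (S : MultilinearMap ℂ (fun _ : Fin (k + 1) => (Fin n → ℂ)) (Fin n → ℂ)) :
    MultilinearMap ℝ (fun _ : Fin (k + 1) => (Fin n → ℝ)) (Fin n → ℝ) :=
  (Complex.imLm.compLeft (Fin n)).compMultilinearMap
    ((S.restrictScalars ℝ).compLinearMap
      (fun _ => LinearMap.compLeft Complex.ofRealAm.toLinearMap (Fin n)))

lemma reMap_apply {n k : ℕ} (S : MultilinearMap ℂ (fun _ : Fin (k + 1) => (Fin n → ℂ)) (Fin n → ℂ))
    (v : Fin (k+1) → Fin n → ℝ) (j : Fin n) :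
    reMap S v j = (S (fun i j' => ((v i j' : ℝ) : ℂ)) j).re := rfl

lemma imMap_apply {n k : ℕ} (S : MultilinearMap ℂ (fun _ : Fin (k + 1) => (Fin n → ℂ)) (Fin n → ℂ))
    (v : Fin (k+1) → Fin n → ℝ) (j : Fin n) :
    imMap S v j = (S (fun i j' => ((v i j' : ℝ) : ℂ)) j).im := rfl

lemma snoc_comp {n k : ℕ} (w : Fin k → Fin n → ℝ) (v : Fin n → ℝ) :
    (fun i j' => (((Fin.snoc w v : Fin (k+1) → Fin n → ℝ) i j' : ℝ) : ℂ)) =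
    (Fin.snoc (fun i j' => ((w i j' : ℝ) : ℂ)) (fun j' => ((v j' : ℝ) : ℂ)) :
      Fin (k+1) → Fin n → ℂ) := by
  funext i
  refine Fin.lastCases ?_ ?_ i <;> simp

lemma mulVec_re {n : ℕ} (A B : Matrix (Fin n) (Fin n) ℝ) (v : Fin n → ℝ) (j : Fin n) :
    ((A.map (Complex.ofReal ·) + Complex.I • B.map (Complex.ofReal ·)).mulVec
      (fun j' => ((v j' : ℝ) : ℂ)) j).re = A.mulVec v j := by
  simp [Matrix.mulVec, dotProduct, Complex.re_sum, add_mul, Complex.mul_re]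

lemma mulVec_im {n : ℕ} (A B : Matrix (Fin n) (Fin n) ℝ) (v : Fin n → ℝ) (j : Fin n) :
    ((A.map (Complex.ofReal ·) + Complex.I • B.map (Complex.ofReal ·)).mulVec
      (fun j' => ((v j' : ℝ) : ℂ)) j).im = B.mulVec v j := by
  simp [Matrix.mulVec, dotProduct, Complex.im_sum, add_mul, Complex.mul_im]

lemma mem_prol {n k : ℕ} (g : Submodule ℝ (Matrix (Fin n) (Fin n) ℝ))
    (S : MultilinearMap ℂ (fun _ : Fin (k + 1) => (Fin n → ℂ)) (Fin n → ℂ))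
    (hS : MInProl (complexify (g : Set (Matrix (Fin n) (Fin n) ℝ))) k S) :
    MInProl (g : Set (Matrix (Fin n) (Fin n) ℝ)) k (reMap S) ∧
    MInProl (g : Set (Matrix (Fin n) (Fin n) ℝ)) k (imMap S) := by
  have hsymm_re : MIsSymm (reMap S) := by
    intro σ v
    funext j
    exact congrArg (fun x => (x j).re) (hS.1 σ (fun i j' => ((v i j' : ℝ) : ℂ)))
  have hsymm_im : MIsSymm (imMap S) := by
    intro σ v
    funext j
    exact congrArg (fun x => (x j).im) (hS.1 σ (fun i j' => ((v i j' : ℝ) : ℂ)))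
  refine ⟨⟨hsymm_re, ?_⟩, ⟨hsymm_im, ?_⟩⟩ <;>
  · intro w
    obtain ⟨M, hM, hMv⟩ := hS.2 (fun i j' => ((w i j' : ℝ) : ℂ))
    obtain ⟨A, hA, B, hB, rfl⟩ := hM
    first
    | (refine ⟨A, hA, fun v => funext fun j => ?_⟩
       have h := congrFun (hMv (fun j' => ((v j' : ℝ) : ℂ))) j
       rw [← mulVec_re A B v j, h, reMap_apply, snoc_comp])
    | (refine ⟨B, hB, fun v => funext fun j => ?_⟩
       have h := congrFun (hMv (fun j' => ((v j' : ℝ) : ℂ))) j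
       rw [← mulVec_im A B v j, h, imMap_apply, snoc_comp])

lemma ne_zero_cases {n k : ℕ}
    (S : MultilinearMap ℂ (fun _ : Fin (k + 1) => (Fin n → ℂ)) (Fin n → ℂ))
    (hre : reMap S = 0) (him : imMap S = 0) : S = 0 := by
  have hreal : ∀ v : Fin (k+1) → Fin n → ℝ, S (fun i j' => ((v i j' : ℝ) : ℂ)) = 0 := by
    intro v
    funext j
    have h1 : reMap S v j = 0 := by rw [hre]; rfl
    have h2 : imMap S v j = 0 := by rw [him]; rfl
    exact Complex.ext h1 h2
  refine MultilinearMap.ext fun v => ?_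
  have hv : v = fun i => ∑ j, v i j •
      (fun j' => (((Pi.single j 1 : Fin n → ℝ) j' : ℝ) : ℂ)) := by
    funext i j'
    simp only [Finset.sum_apply, Pi.smul_apply, smul_eq_mul, Pi.single_apply]
    rw [Finset.sum_eq_single j'] <;> simp +contextual [eq_comm]
  rw [MultilinearMap.zero_apply, hv, MultilinearMap.map_sum]
  refine Finset.sum_eq_zero fun r _ => ?_
  rw [MultilinearMap.map_smul_univ]
  have h0 := hreal (fun i => Pi.single (r i) 1)
  rw [show (fun i j' => (((fun i => Pi.single (r i) 1 : Fin (k+1) → Fin n → ℝ) i j' : ℝ) : ℂ)) =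
      (fun i => fun j' => (((Pi.single (r i) 1 : Fin n → ℝ) j' : ℝ) : ℂ)) from rfl] at h0
  rw [h0, smul_zero]

/-- If the `k`-th complex prolongation `(g_ℂ)^{(k)}` is nonzero then so is the `k`-th real
prolongation `g^{(k)}`; more precisely, if `T` is a nonzero element of `(g_ℂ)^{(k)}` then
at least one of `(Re T) ∘ ι^{k+1}` or `(Im T) ∘ ι^{k+1}` is a nonzero element of
`g^{(k)}`, where `ι : ℝⁿ ↪ ℂⁿ` is the standard inclusion. -/
theorem statement4 {n : ℕ} (g : Submodule ℝ (Matrix (Fin n) (Fin n) ℝ)) (k : ℕ) :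
    ((∃ S : MultilinearMap ℂ (fun _ : Fin (k + 1) => (Fin n → ℂ)) (Fin n → ℂ),
        MInProl (complexify (g : Set (Matrix (Fin n) (Fin n) ℝ))) k S ∧ S ≠ 0) →
      ∃ T : MultilinearMap ℝ (fun _ : Fin (k + 1) => (Fin n → ℝ)) (Fin n → ℝ),
        MInProl (g : Set (Matrix (Fin n) (Fin n) ℝ)) k T ∧ T ≠ 0) ∧
    ∀ S : MultilinearMap ℂ (fun _ : Fin (k + 1) => (Fin n → ℂ)) (Fin n → ℂ),
      MInProl (complexify (g : Set (Matrix (Fin n) (Fin n) ℝ))) k S → S ≠ 0 →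
        ∃ T : MultilinearMap ℝ (fun _ : Fin (k + 1) => (Fin n → ℝ)) (Fin n → ℝ),
          ((∀ v : Fin (k + 1) → Fin n → ℝ,
              T v = fun j => (S (fun i j' => ((v i j' : ℝ) : ℂ)) j).re) ∨
            (∀ v : Fin (k + 1) → Fin n → ℝ,
              T v = fun j => (S (fun i j' => ((v i j' : ℝ) : ℂ)) j).im)) ∧
          MInProl (g : Set (Matrix (Fin n) (Fin n) ℝ)) k T ∧ T ≠ 0 := by
  have main : ∀ S : MultilinearMap ℂ (fun _ : Fin (k + 1) => (Fin n → ℂ)) (Fin n → ℂ),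
      MInProl (complexify (g : Set (Matrix (Fin n) (Fin n) ℝ))) k S → S ≠ 0 →
        ∃ T : MultilinearMap ℝ (fun _ : Fin (k + 1) => (Fin n → ℝ)) (Fin n → ℝ),
          ((∀ v : Fin (k + 1) → Fin n → ℝ,
              T v = fun j => (S (fun i j' => ((v i j' : ℝ) : ℂ)) j).re) ∨
            (∀ v : Fin (k + 1) → Fin n → ℝ,
              T v = fun j => (S (fun i j' => ((v i j' : ℝ) : ℂ)) j).im)) ∧
          MInProl (g : Set (Matrix (Fin n) (Fin n) ℝ)) k T ∧ T ≠ 0 := by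
    intro S hS hS0
    obtain ⟨hre, him⟩ := mem_prol g S hS
    by_cases h : reMap S = 0
    · exact ⟨imMap S, Or.inr fun v => funext fun j => rfl, him,
        fun h0 => hS0 (ne_zero_cases S h h0)⟩
    · exact ⟨reMap S, Or.inl fun v => funext fun j => rfl, hre, h⟩
  refine ⟨?_, main⟩
  rintro ⟨S, hS, hS0⟩
  obtain ⟨T, _, hT, hT0⟩ := main S hS hS0
  exact ⟨T, hT, hT0⟩
end

section
/- Let n ≥ 1 and equip ℝⁿ with its standard inner product ⟨·,·⟩. For ξ ∈ (ℝⁿ)* let ξ♯ ∈ ℝⁿ denote the vector with ⟨ξ♯, w⟩ = ξ(w) for all w. Then the map sending ξ ∈ (ℝⁿ)* to the symmetric bilinear map T_ξ : ℝⁿ × ℝⁿ → ℝⁿ, T_ξ(u,v) = ξ(u)·v + ξ(v)·u − ⟨u,v⟩·ξ♯, is a linear isomorphism from (ℝⁿ)* onto the first Singer–Sternberg prolongation co(n)^{(1)} of co(n); in particular dim co(n)^{(1)} = n. -/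
/-!
For `T ∈ co(n)^{(1)}` the endomorphism `T(u, ·)` is conformal, so its diagonal entries all equal
half of its conformal factor; their average `ξ_T(u) = tr T(u, ·) / n` is linear in `u`. The
difference `S = T - T_{ξ_T}` lies in `co(n)^{(1)}` and has vanishing diagonal, so each `S(u, ·)` is
skew. Then `(u, v, w) ↦ ⟨S(u, v), w⟩` is symmetric in its first two and skew in its last two
arguments, which forces it to vanish. Injectivity of `ξ ↦ T_ξ` comes from
`⟨T_ξ(u, u), u⟩ = ξ(u) ⟨u, u⟩`.
-/

/-- The conformal Lie algebra `co(n) = {A ∈ gl(n,ℝ) : A + Aᵀ = c • I for some c ∈ ℝ}`. -/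
def co (n : ℕ) : Set (Matrix (Fin n) (Fin n) ℝ) :=
  {A | ∃ c : ℝ, A + A.transpose = c • (1 : Matrix (Fin n) (Fin n) ℝ)}

/-- The first Singer–Sternberg prolongation `co(n)^{(1)}` of `co(n)`, as a subspace of the
space of bilinear maps `ℝⁿ × ℝⁿ → ℝⁿ`: symmetric bilinear maps `T` such that for each
`u ∈ ℝⁿ` the endomorphism `v ↦ T(u,v)` lies in `co(n)`. -/
noncomputable def coProl1 (n : ℕ) :
    Submodule ℝ (MultilinearMap ℝ (fun _ : Fin 2 => (Fin n → ℝ)) (Fin n → ℝ)) where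
  carrier := {T |
    (∀ (σ : Equiv.Perm (Fin 2)) (v : Fin 2 → Fin n → ℝ), (T fun i => v (σ i)) = T v) ∧
    ∀ u : Fin n → ℝ, ∃ M ∈ co n, ∀ v : Fin n → ℝ, M.mulVec v = T ![u, v]}
  add_mem' := by
    rintro T T' ⟨hs, hc⟩ ⟨hs', hc'⟩
    refine ⟨fun σ v => ?_, fun u => ?_⟩
    · simp [hs σ v, hs' σ v]
    · obtain ⟨M, ⟨c, hM⟩, h⟩ := hc u
      obtain ⟨M', ⟨c', hM'⟩, h'⟩ := hc' u
      refine ⟨M + M', ⟨c + c', ?_⟩, fun v => ?_⟩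
      · rw [Matrix.transpose_add, add_smul, ← hM, ← hM']
        abel
      · simp [Matrix.add_mulVec, h v, h' v]
  zero_mem' := by
    refine ⟨fun σ v => rfl, fun u => ⟨0, ⟨0, by simp⟩, fun v => by simp⟩⟩
  smul_mem' := by
    rintro a T ⟨hs, hc⟩
    refine ⟨fun σ v => ?_, fun u => ?_⟩
    · simp [hs σ v]
    · obtain ⟨M, ⟨c, hM⟩, h⟩ := hc u
      refine ⟨a • M, ⟨a * c, ?_⟩, fun v => ?_⟩
      · rw [Matrix.transpose_smul, ← smul_add, hM, smul_smul]
      · simp [Matrix.smul_mulVec, h v]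

open Matrix

section Generic

variable {α β : Type*}

theorem forall_perm_fin_two_iff {f : (Fin 2 → α) → β} :
    (∀ (σ : Equiv.Perm (Fin 2)) (v : Fin 2 → α), f (fun i => v (σ i)) = f v) ↔
      ∀ a b, f ![a, b] = f ![b, a] := by
  refine ⟨fun h a b => (h (Equiv.swap 0 1) ![a, b]).symm.trans ?_, fun h σ v => ?_⟩
  · congr 1; ext i; fin_cases i <;> rfl
  · obtain rfl | rfl : σ = 1 ∨ σ = Equiv.swap 0 1 := by revert σ; decide
    · rfl
    · convert h (v 1) (v 0) using 2 <;> ext i <;> fin_cases i <;> rfl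

theorem eq_zero_of_symm_of_skew {G : Type*} [AddCommGroup G] [IsAddTorsionFree G]
    (B : α → α → α → G) (hsymm : ∀ u v w, B u v w = B v u w)
    (hskew : ∀ u v w, B u v w = -B u w v) (u v w : α) : B u v w = 0 := by
  have : B u v w = -B u v w := calc
    B u v w = -B u w v := hskew u v w
    _ = -B w u v := by rw [hsymm]
    _ = B w v u := by rw [hskew w u v, neg_neg]
    _ = B v w u := hsymm w v u
    _ = -B v u w := hskew v w u
    _ = -B u v w := by rw [hsymm]
  exact self_eq_neg.mp this

theorem Matrix.update_vecCons_zero {m : ℕ} (x y : α) (v : Fin m → α) :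
    Function.update (vecCons x v) 0 y = vecCons y v :=
  Fin.update_cons_zero (α := fun _ => α) x v y

end Generic

section DotProduct

variable {R ι : Type*} [CommRing R] [Fintype ι]

theorem Matrix.mulVec_dotProduct_eq_neg_of_add_transpose_eq_zero {M : Matrix ι ι R}
    (hM : M + Mᵀ = 0) (v w : ι → R) : M *ᵥ v ⬝ᵥ w = -(M *ᵥ w ⬝ᵥ v) := by
  rw [dotProduct_comm, dotProduct_mulVec, ← mulVec_transpose, eq_neg_of_add_eq_zero_right hM,
    neg_mulVec, neg_dotProduct]

variable [DecidableEq ι]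

def dualVec (ξ : (ι → R) →ₗ[R] R) : ι → R := fun j => ξ (Pi.single j 1)

theorem dualVec_dotProduct (ξ : (ι → R) →ₗ[R] R) (v : ι → R) : dualVec ξ ⬝ᵥ v = ξ v := by
  conv_rhs => rw [← Finset.univ_sum_single v, map_sum]
  refine Finset.sum_congr rfl fun i _ => ?_
  rw [mul_comm, ← smul_eq_mul, dualVec, ← map_smul, ← Pi.single_smul', smul_eq_mul, mul_one]

end DotProduct

variable {n : ℕ}

noncomputable def conformalTensor :
    ((Fin n → ℝ) →ₗ[ℝ] ℝ) →ₗ[ℝ] MultilinearMap ℝ (fun _ : Fin 2 => Fin n → ℝ) (Fin n → ℝ) where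
  toFun ξ := MultilinearMap.mk' (fun m => ξ (m 0) • m 1 + ξ (m 1) • m 0 - (m 0 ⬝ᵥ m 1) • dualVec ξ)
    (fun m i x y => by
      fin_cases i <;> simp [add_dotProduct, dotProduct_add] <;> module)
    (fun m i c x => by
      fin_cases i <;> simp [smul_dotProduct, dotProduct_smul, mul_smul] <;> module)
  map_add' ξ η := by ext m j; simp [dualVec]; ring
  map_smul' c ξ := by ext m j; simp [dualVec]; ring

theorem conformalTensor_apply (ξ : (Fin n → ℝ) →ₗ[ℝ] ℝ) (u v : Fin n → ℝ) :
    conformalTensor ξ ![u, v] = ξ u • v + ξ v • u - (u ⬝ᵥ v) • dualVec ξ := rfl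

theorem conformalTensor_apply_single_self (ξ : (Fin n → ℝ) →ₗ[ℝ] ℝ) (u : Fin n → ℝ)
    (i : Fin n) : conformalTensor ξ ![u, Pi.single i 1] i = ξ u := by
  simp [conformalTensor_apply, dotProduct_single, dualVec, mul_comm]

theorem conformalTensor_mem (ξ : (Fin n → ℝ) →ₗ[ℝ] ℝ) : conformalTensor ξ ∈ coProl1 n := by
  refine ⟨forall_perm_fin_two_iff.mpr fun u v => ?_, fun u => ?_⟩
  · simp only [conformalTensor_apply, dotProduct_comm u]
    abel
  · refine ⟨ξ u • 1 + vecMulVec u (dualVec ξ) - vecMulVec (dualVec ξ) u, ⟨2 * ξ u, ?_⟩,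
      fun v => ?_⟩
    · simp only [transpose_add, transpose_sub, transpose_smul, transpose_one, transpose_vecMulVec]
      module
    · simp [sub_mulVec, add_mulVec, smul_mulVec, vecMulVec_mulVec, dualVec_dotProduct,
        conformalTensor_apply]

theorem conformalTensor_injective : Function.Injective (conformalTensor (n := n)) := by
  refine (injective_iff_map_eq_zero _).mpr fun ξ hξ => LinearMap.ext fun u => ?_
  have h : conformalTensor ξ ![u, u] ⬝ᵥ u = ξ u * (u ⬝ᵥ u) := by
    simp only [conformalTensor_apply, sub_dotProduct, add_dotProduct, smul_dotProduct,
      dualVec_dotProduct, smul_eq_mul]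
    ring
  rw [hξ, _root_.zero_apply, zero_dotProduct, zero_eq_mul, dotProduct_self_eq_zero] at h
  rcases h with h | rfl
  · exact h
  · exact map_zero ξ

section Prolongation

variable {T : MultilinearMap ℝ (fun _ : Fin 2 => Fin n → ℝ) (Fin n → ℝ)}

theorem apply_single_self_eq_of_mem_coProl1 (hT : T ∈ coProl1 n) (u : Fin n → ℝ) (i j : Fin n) :
    T ![u, Pi.single i 1] i = T ![u, Pi.single j 1] j := by
  obtain ⟨M, ⟨c, hM⟩, hMT⟩ := hT.2 u
  have hii := congr_fun₂ hM i i
  have hjj := congr_fun₂ hM j j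
  simp only [Matrix.add_apply, transpose_apply, Matrix.smul_apply, one_apply_eq,
    smul_eq_mul] at hii hjj
  rw [← hMT, ← hMT, mulVec_single_one, mulVec_single_one, col_apply, col_apply]
  linarith

theorem eq_zero_of_mem_coProl1_of_diag_eq_zero (hT : T ∈ coProl1 n)
    (hdiag : ∀ u i, T ![u, Pi.single i 1] i = 0) : T = 0 := by
  have hskew (u v w : Fin n → ℝ) : T ![u, v] ⬝ᵥ w = -(T ![u, w] ⬝ᵥ v) := by
    obtain ⟨M, ⟨c, hM⟩, hMT⟩ := hT.2 u
    have hM0 : M + Mᵀ = 0 := by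
      ext i j
      by_cases hij : i = j
      · subst hij
        have hii := hdiag u i
        rw [← hMT, mulVec_single_one, col_apply] at hii
        simp [hii]
      · rw [hM]
        simp [hij]
    rw [← hMT, ← hMT]
    exact mulVec_dotProduct_eq_neg_of_add_transpose_eq_zero hM0 v w
  have hB := eq_zero_of_symm_of_skew (fun u v w => T ![u, v] ⬝ᵥ w)
    (fun u v w => by rw [forall_perm_fin_two_iff.mp hT.1]) hskew
  refine MultilinearMap.ext fun m => funext fun i => ?_
  have hm : m = ![m 0, m 1] := (FinVec.etaExpand_eq m).symm
  rw [hm]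
  simpa [dotProduct_single] using hB (m 0) (m 1) (Pi.single i 1)

noncomputable def normalizedTrace
    (T : MultilinearMap ℝ (fun _ : Fin 2 => Fin n → ℝ) (Fin n → ℝ)) : (Fin n → ℝ) →ₗ[ℝ] ℝ :=
  (n : ℝ)⁻¹ • ∑ i, LinearMap.proj i ∘ₗ T.toLinearMap ![0, Pi.single i 1] 0

theorem normalizedTrace_apply_eq (hT : T ∈ coProl1 n) (u : Fin n → ℝ) (i : Fin n) :
    normalizedTrace T u = T ![u, Pi.single i 1] i := by
  have hn : (n : ℝ) ≠ 0 := Nat.cast_ne_zero.mpr i.pos.ne'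
  simp [normalizedTrace, update_vecCons_zero, apply_single_self_eq_of_mem_coProl1 hT u _ i, hn]

theorem conformalTensor_normalizedTrace (hT : T ∈ coProl1 n) :
    conformalTensor (normalizedTrace T) = T := by
  refine (sub_eq_zero.mp (eq_zero_of_mem_coProl1_of_diag_eq_zero
    (sub_mem hT (conformalTensor_mem _)) fun u i => ?_)).symm
  rw [_root_.sub_apply, Pi.sub_apply, conformalTensor_apply_single_self,
    normalizedTrace_apply_eq hT u i, sub_self]

end Prolongation

theorem statement7_general (n : ℕ) :
    (∃ e : ((Fin n → ℝ) →ₗ[ℝ] ℝ) ≃ₗ[ℝ] coProl1 n,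
        ∀ (ξ : (Fin n → ℝ) →ₗ[ℝ] ℝ) (u v : Fin n → ℝ),
          (e ξ : MultilinearMap ℝ (fun _ : Fin 2 => (Fin n → ℝ)) (Fin n → ℝ)) ![u, v] =
            ξ u • v + ξ v • u - (∑ i, u i * v i) • (fun j => ξ (Pi.single j 1))) ∧
      Module.finrank ℝ (coProl1 n) = n := by
  let e := LinearEquiv.ofBijective (conformalTensor.codRestrict (coProl1 n) conformalTensor_mem)
    ⟨fun ξ η h => conformalTensor_injective (congrArg Subtype.val h),
      fun T => ⟨normalizedTrace T, Subtype.ext (conformalTensor_normalizedTrace T.2)⟩⟩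
  refine ⟨⟨e, fun ξ u v => rfl⟩, ?_⟩
  rw [← e.finrank_eq, Module.finrank_linearMap_self, Module.finrank_fin_fun]

/-- For `n ≥ 1`, the map `ξ ↦ T_ξ`, where
`T_ξ(u,v) = ξ(u) • v + ξ(v) • u − ⟨u,v⟩ • ξ♯`,
is a linear isomorphism from `(ℝⁿ)*` onto `co(n)^{(1)}`; in particular
`dim co(n)^{(1)} = n`. -/
theorem statement7 (n : ℕ) (hn : 1 ≤ n) :
    (∃ e : ((Fin n → ℝ) →ₗ[ℝ] ℝ) ≃ₗ[ℝ] coProl1 n,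
        ∀ (ξ : (Fin n → ℝ) →ₗ[ℝ] ℝ) (u v : Fin n → ℝ),
          (e ξ : MultilinearMap ℝ (fun _ : Fin 2 => (Fin n → ℝ)) (Fin n → ℝ)) ![u, v] =
            ξ u • v + ξ v • u - (∑ i, u i * v i) • (fun j => ξ (Pi.single j 1))) ∧
      Module.finrank ℝ (coProl1 n) = n :=
  statement7_general n
end

section
/- For every n ≥ 3, the second Singer–Sternberg prolongation of co(n) vanishes: co(n)^{(2)} = {0}. That is, every symmetric trilinear map T : ℝⁿ × ℝⁿ × ℝⁿ → ℝⁿ such that for all u,v ∈ ℝⁿ the endomorphism w ↦ T(u,v,w) lies in co(n) is identically zero. -/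
/-- For `n ≥ 3` the second Singer–Sternberg prolongation of `co(n)` vanishes: every
symmetric trilinear map `T : ℝⁿ × ℝⁿ × ℝⁿ → ℝⁿ` such that for all `u, v` the
endomorphism `w ↦ T(u,v,w)` lies in `co(n)` is identically zero. -/
theorem statement8 (n : ℕ) (hn : 3 ≤ n)
    (T : MultilinearMap ℝ (fun _ : Fin 3 => (Fin n → ℝ)) (Fin n → ℝ))
    (hsymm : ∀ (σ : Equiv.Perm (Fin 3)) (v : Fin 3 → Fin n → ℝ),
      (T fun i => v (σ i)) = T v)
    (hco : ∀ u v : Fin n → ℝ, ∃ M ∈ co n, ∀ w : Fin n → ℝ,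
      M.mulVec w = T ![u, v, w]) :
    T = 0 := by
  have h0 : 0 < n := by omega
  -- basis vectors
  set e : Fin n → (Fin n → ℝ) := fun i => Pi.single i 1 with hedef
  set F : (Fin n → ℝ) → (Fin n → ℝ) → (Fin n → ℝ) → (Fin n → ℝ) → ℝ :=
    fun u v w x => dotProduct (T ![u, v, w]) x with hFdef
  set c : (Fin n → ℝ) → (Fin n → ℝ) → ℝ :=
    fun u v => 2 * F u v (e ⟨0, h0⟩) (e ⟨0, h0⟩) with hcdef
  -- dot product lemmas
  have gsym : ∀ a b : Fin n → ℝ, dotProduct a b = dotProduct b a :=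
    fun a b => dotProduct_comm a b
  have geR : ∀ (a : Fin n) (v : Fin n → ℝ), dotProduct v (e a) = v a := by
    intro a v; simp [hedef]
  have geL : ∀ (a : Fin n) (v : Fin n → ℝ), dotProduct (e a) v = v a := by
    intro a v; simp [hedef]
  have eval : ∀ a b : Fin n, e a b = if b = a then 1 else 0 := by
    intro a b; simp [hedef, Pi.single_apply]
  have gee1 : ∀ a : Fin n, dotProduct (e a) (e a) = 1 := by
    intro a; rw [geR, eval]; simp
  have gee0 : ∀ a b : Fin n, a ≠ b → dotProduct (e a) (e b) = 0 := by
    intro a b hab; rw [geR, eval]; exact if_neg (Ne.symm hab)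
  -- symmetry of T
  have sym12 : ∀ u v w, T ![u, v, w] = T ![v, u, w] := by
    intro u v w
    have h := hsymm (Equiv.swap 0 1) ![u, v, w]
    have key : (fun i => ![u, v, w] (Equiv.swap 0 1 i)) = ![v, u, w] := by
      funext i; fin_cases i <;> simp [Equiv.swap_apply_def]
    rw [key] at h; exact h.symm
  have sym13 : ∀ u v w, T ![u, v, w] = T ![w, v, u] := by
    intro u v w
    have h := hsymm (Equiv.swap 0 2) ![u, v, w]
    have key : (fun i => ![u, v, w] (Equiv.swap 0 2 i)) = ![w, v, u] := by
      funext i; fin_cases i <;> simp [Equiv.swap_apply_def]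
    rw [key] at h; exact h.symm
  have sym23 : ∀ u v w, T ![u, v, w] = T ![u, w, v] := by
    intro u v w
    have h := hsymm (Equiv.swap 1 2) ![u, v, w]
    have key : (fun i => ![u, v, w] (Equiv.swap 1 2 i)) = ![u, w, v] := by
      funext i; fin_cases i <;> simp [Equiv.swap_apply_def]
    rw [key] at h; exact h.symm
  have fs12 : ∀ u v w x, F u v w x = F v u w x := by
    intro u v w x; simp only [hFdef]; rw [sym12]
  have fs13 : ∀ u v w x, F u v w x = F w v u x := by
    intro u v w x; simp only [hFdef]; rw [sym13]
  have fs23 : ∀ u v w x, F u v w x = F u w v x := by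
    intro u v w x; simp only [hFdef]; rw [sym23]
  -- the conformal relation
  have hrel : ∀ u v w x, F u v w x + F u v x w = c u v * dotProduct w x := by
    intro u v w x
    obtain ⟨M, ⟨cM, hM⟩, hMw⟩ := hco u v
    have key : ∀ a b : Fin n → ℝ,
        F u v a b + F u v b a = cM * dotProduct a b := by
      intro a b
      have hFa : F u v a b = dotProduct (M.mulVec a) b := by
        simp only [hFdef]; rw [hMw]
      have hFb : F u v b a = dotProduct (M.mulVec b) a := by
        simp only [hFdef]; rw [hMw]
      have htr : dotProduct (M.mulVec a) b
          = dotProduct (M.transpose.mulVec b) a := by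
        rw [Matrix.mulVec_transpose, ← Matrix.dotProduct_mulVec, dotProduct_comm]
      have hsum : dotProduct (M.transpose.mulVec b) a
          + dotProduct (M.mulVec b) a
          = cM * dotProduct a b := by
        rw [← add_dotProduct, ← Matrix.add_mulVec]
        rw [add_comm M.transpose M, hM]
        rw [Matrix.smul_mulVec, Matrix.one_mulVec]
        rw [smul_dotProduct, dotProduct_comm]
        simp [smul_eq_mul]
      rw [hFa, hFb, htr]
      exact hsum
    have hc : c u v = cM := by
      have h00 := key (e ⟨0, h0⟩) (e ⟨0, h0⟩)
      rw [gee1] at h00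
      simp only [hcdef]
      linarith
    rw [hc]
    exact key w x
  -- master formula
  have star : ∀ u v w x, 2 * F u v w x
      = c u v * dotProduct w x + c u w * dotProduct v x
        - c u x * dotProduct v w := by
    intro u v w x
    have E1 := hrel u v w x
    have E2 := hrel u x v w
    have E3 := hrel u w x v
    have h1 := fs23 u v x w
    have h2 := fs23 u x w v
    have h3 := fs23 u w v x
    rw [gsym x v] at E3
    linarith
  have csym : ∀ u v, c u v = c v u := by
    intro u v; simp only [hcdef]; rw [fs12]
  -- symmetrized constraint
  have dstar : ∀ u v w x,
      c u v * dotProduct w x - c u x * dotProduct v w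
      = c w v * dotProduct u x - c w x * dotProduct u v := by
    intro u v w x
    have h1 := star u v w x
    have h2 := star w v u x
    have h3 := fs13 u v w x
    rw [csym w u, gsym v u] at h2
    linarith
  have third : ∀ s t : Fin n, ∃ a : Fin n, a ≠ s ∧ a ≠ t := by
    intro s t
    by_contra h
    push_neg at h
    have hsub : (Finset.univ : Finset (Fin n)) ⊆ {s, t} := by
      intro a _
      simp only [Finset.mem_insert, Finset.mem_singleton]
      by_cases ha : a = s
      · exact Or.inl ha
      · exact Or.inr (h a ha)
    have hc2 := Finset.card_le_card hsub
    have h2 : ({s, t} : Finset (Fin n)).card ≤ 2 :=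
      (Finset.card_insert_le s {t}).trans (by simp)
    simp [Finset.card_fin] at hc2
    omega
  -- key identity A
  have A : ∀ (u v : Fin n → ℝ) (a b : Fin n), a ≠ b →
      c (e a) v * u b + c u (e b) * v a
        = c (e a) (e b) * dotProduct u v := by
    intro u v a b hab
    have h := dstar u v (e a) (e b)
    rw [gee0 a b hab, geR a v, geR b u] at h
    linarith
  have coff : ∀ t b : Fin n, t ≠ b → c (e t) (e b) = 0 := by
    intro t b htb
    obtain ⟨a, hat, habb⟩ := third t b
    have h := A (e t) (e a) a b habb
    rw [eval t b, eval a a, gee0 t a (Ne.symm hat)] at h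
    rw [if_neg (Ne.symm htb), if_pos rfl] at h
    linarith
  have cdiag : ∀ a : Fin n, c (e a) (e a) = 0 := by
    have rel : ∀ a b : Fin n, a ≠ b → c (e a) (e a) = - c (e b) (e b) := by
      intro a b hab
      have h := A (e b) (e a) a b hab
      rw [eval b b, eval a a, coff a b hab] at h
      simp at h
      linarith
    intro a
    obtain ⟨b, hba, _⟩ := third a a
    obtain ⟨d, hda, hdb⟩ := third a b
    have h1 := rel a b (Ne.symm hba)
    have h2 := rel a d (Ne.symm hda)
    have h3 := rel b d (Ne.symm hdb)
    linarith
  have cright : ∀ (u : Fin n → ℝ) (b : Fin n), c u (e b) = 0 := by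
    intro u b
    obtain ⟨a, hab, _⟩ := third b b
    have h := A u (e a) a b hab
    rw [eval a a, cdiag a, coff a b hab] at h
    simp at h
    linarith
  have cleft : ∀ (v : Fin n → ℝ) (a : Fin n), c (e a) v = 0 := by
    intro v a
    obtain ⟨b, hba, _⟩ := third a a
    have h := A (e b) v a b (Ne.symm hba)
    rw [eval b b, cdiag b, coff a b (Ne.symm hba)] at h
    simp at h
    linarith
  have czero : ∀ u v, c u v = 0 := by
    intro u v
    have h := dstar u v (e ⟨0, h0⟩) (e ⟨0, h0⟩)
    rw [gee1, cright u ⟨0, h0⟩, cleft v ⟨0, h0⟩, cdiag] at h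
    simp at h
    linarith
  have Fzero : ∀ u v w x, F u v w x = 0 := by
    intro u v w x
    have h := star u v w x
    rw [czero u v, czero u w, czero u x] at h
    linarith
  -- conclude
  have hT : ∀ v : Fin 3 → (Fin n → ℝ), T v = 0 := by
    intro v
    have hv : ![v 0, v 1, v 2] = v := by
      funext i; fin_cases i <;> simp
    funext j
    have h := Fzero (v 0) (v 1) (v 2) (e j)
    simp only [hFdef] at h
    rw [geR j] at h
    rw [hv] at h
    simpa using h
  exact MultilinearMap.ext hT
end

section
/- Let n = g_{−s} ⊕ ⋯ ⊕ g_{−1} be a stratified nilpotent Lie algebra over a field 𝕜 (𝕜 = ℝ or ℂ). If φ ∈ h₀(n) is a derivation of rank 1, then any nonzero vector X spanning the image of φ lies in g_{−1}, and the adjoint map ad X : n → n, Y ↦ [X,Y], has rank at most 1. -/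
/-- Let `n = g_{−s} ⊕ ⋯ ⊕ g_{−1}` be a stratified nilpotent Lie algebra over `𝕜` (`ℝ` or
`ℂ`), encoded by subspaces `g i = g_{−i}` for `1 ≤ i ≤ s` (with `g 0 = ⊥` and `g m = ⊥`
for `m > s`).  If `φ ∈ h₀(n)` is a derivation of rank 1 (i.e. `φ(g_{−1}) ⊆ g_{−1}`,
`φ(g_{−j}) = 0` for `2 ≤ j ≤ s`, and the image of `φ` is one-dimensional), then any
nonzero vector `X` spanning the image of `φ` lies in `g_{−1}` and `ad X` has rank at
most 1. -/
theorem statement10 {𝕜 L : Type*} [RCLike 𝕜] [LieRing L] [LieAlgebra 𝕜 L]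
    [Module.Finite 𝕜 L]
    (s : ℕ) (hs : 1 ≤ s) (g : ℕ → Submodule 𝕜 L)
    (hg0 : g 0 = ⊥) (hgtop : ∀ m, s < m → g m = ⊥)
    (hsup : (⨆ i, g i) = ⊤)
    (hindep : ∀ i, Disjoint (g i) (⨆ j, ⨆ _ : j ≠ i, g j))
    (hbrk : ∀ i j, ∀ X ∈ g i, ∀ Y ∈ g j, ⁅X, Y⁆ ∈ g (i + j))
    (hgen : ∀ j, 1 ≤ j → j + 1 ≤ s →
      g (j + 1) = Submodule.span 𝕜 {Z | ∃ X ∈ g 1, ∃ Y ∈ g j, ⁅X, Y⁆ = Z})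
    (φ : L →ₗ[𝕜] L)
    (hder : ∀ X Y : L, φ ⁅X, Y⁆ = ⁅φ X, Y⁆ + ⁅X, φ Y⁆)
    (hφ1 : ∀ X ∈ g 1, φ X ∈ g 1)
    (hφ0 : ∀ j, 2 ≤ j → j ≤ s → ∀ X ∈ g j, φ X = 0)
    (hrk : Module.finrank 𝕜 (LinearMap.range φ) = 1) :
    ∀ X : L, X ≠ 0 → X ∈ LinearMap.range φ →
      X ∈ g 1 ∧ Module.finrank 𝕜 (LinearMap.range (LieAlgebra.ad 𝕜 L X)) ≤ 1 := by
  -- The range of φ is contained in φ(g 1)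
  have hrange : LinearMap.range φ ≤ Submodule.map φ (g 1) := by
    rw [LinearMap.range_eq_map, ← hsup, Submodule.map_iSup]
    apply iSup_le
    intro i
    match i with
    | 0 => rw [hg0]; simp
    | 1 => exact le_rfl
    | (j+2) =>
      by_cases h : j + 2 ≤ s
      · rintro x ⟨y, hy, rfl⟩
        rw [hφ0 (j+2) (by omega) h y hy]
        exact Submodule.zero_mem _
      · rw [hgtop (j+2) (by omega)]; simp
  have hg1le : Submodule.map φ (g 1) ≤ g 1 := by
    rintro x ⟨y, hy, rfl⟩; exact hφ1 y hy
  intro X hX hXr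
  have hX1 : X ∈ g 1 := hg1le (hrange hXr)
  obtain ⟨Y₀, hY₀, hφY₀⟩ := hrange hXr
  -- key : φ kills all brackets ⁅V, W⁆ with V ∈ g 1
  have key : ∀ V ∈ g 1, ∀ W : L, φ ⁅V, W⁆ = 0 := by
    intro V hV W
    suffices h : (⊤ : Submodule 𝕜 L) ≤ LinearMap.ker (φ ∘ₗ (LieAlgebra.ad 𝕜 L V)) by
      have := h (Submodule.mem_top : W ∈ (⊤ : Submodule 𝕜 L))
      simpa using this
    rw [← hsup]
    apply iSup_le
    intro j x hx
    simp only [LinearMap.mem_ker, LinearMap.comp_apply, LieAlgebra.ad_apply]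
    match j with
    | 0 =>
      rw [hg0, Submodule.mem_bot] at hx
      simp [hx]
    | (j+1) =>
      have hb : ⁅V, x⁆ ∈ g (1 + (j+1)) := hbrk 1 (j+1) V hV x hx
      by_cases h : 1 + (j+1) ≤ s
      · exact hφ0 _ (by omega) h _ hb
      · rw [hgtop _ (by omega), Submodule.mem_bot] at hb
        simp [hb]
  -- The range of φ equals the span of X
  have hspan : Submodule.span 𝕜 {X} = LinearMap.range φ := by
    apply Submodule.eq_of_le_of_finrank_le
    · rw [Submodule.span_le, Set.singleton_subset_iff]; exact hXr
    · rw [hrk, finrank_span_singleton hX]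
  have hadW : ∀ W : L, ∃ c : 𝕜, ⁅X, W⁆ = c • ⁅X, Y₀⁆ := by
    intro W
    have h1 : φ W ∈ Submodule.span 𝕜 {X} := by
      rw [hspan]; exact LinearMap.mem_range_self φ W
    obtain ⟨c, hc⟩ := Submodule.mem_span_singleton.mp h1
    refine ⟨c, ?_⟩
    have h2 : φ ⁅Y₀, W⁆ = 0 := key Y₀ hY₀ W
    rw [hder, hφY₀] at h2
    have h3 : ⁅X, W⁆ = -⁅Y₀, φ W⁆ := by
      rw [eq_neg_iff_add_eq_zero]; exact h2
    rw [h3, ← hc, lie_smul, ← smul_neg, ← lie_skew]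
    simp
  refine ⟨hX1, ?_⟩
  have hle : LinearMap.range (LieAlgebra.ad 𝕜 L X) ≤ Submodule.span 𝕜 {⁅X, Y₀⁆} := by
    rintro y ⟨W, rfl⟩
    obtain ⟨c, hc⟩ := hadW W
    rw [LieAlgebra.ad_apply, hc]
    exact Submodule.smul_mem _ _ (Submodule.mem_span_singleton_self _)
  refine le_trans (Submodule.finrank_mono hle) ?_
  by_cases h : ⁅X, Y₀⁆ = 0
  · rw [h, Submodule.span_zero_singleton]
    simp
  · rw [finrank_span_singleton h]
end

section
/- Let n = g_{−s} ⊕ ⋯ ⊕ g_{−1} be a stratified nilpotent Lie algebra over a field 𝕜 (𝕜 = ℝ or ℂ). If there exists a nonzero X ∈ g_{−1} such that ad X : n → n has rank at most 1, then h₀(n) contains a derivation of rank 1. -/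
/-!
Let `M = ⨆_{j ≠ 1} g j`; every bracket lies in `M`. For a nonzero functional `f` vanishing on `M`
with `f Y • ⁅X, Z⁆ = f Z • ⁅X, Y⁆`, the rank-one map `Y ↦ f Y • X` is a derivation in `h₀(n)`:
it kills `⁅n, n⁆ ⊆ M` while `⁅f Y • X, Z⁆ + ⁅Y, f Z • X⁆ = 0` by the symmetry of `f`.
If `ad X` kills `g 1`, it kills all of `n` because `g 1` generates, so `X` is central and any
functional with `f X ≠ 0` and `M ≤ ker f` works. Otherwise `ad X = μ(·) • W` with
`W = ⁅X, Y₀⁆ ∈ g 2` and `Y₀ ∈ g 1`; as `⁅X, g j⁆ ⊆ g (j + 1) ∩ 𝕜 W = 0` for `j ≠ 1`, the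
coefficient `μ` vanishes on `M`, and `f = μ` works.
-/

open LinearMap Submodule

theorem LinearMap.exists_eq_smul_of_finrank_range_le_one {K V W : Type*} [Field K]
    [AddCommGroup V] [Module K V] [AddCommGroup W] [Module K W] [FiniteDimensional K V]
    {T : V →ₗ[K] W} (hT : Module.finrank K (range T) ≤ 1) {v₀ : V} (hv₀ : T v₀ ≠ 0) :
    ∃ μ : V →ₗ[K] K, ∀ v, T v = μ v • T v₀ := by
  have hspan : K ∙ T v₀ = range T :=
    eq_of_le_of_finrank_le ((span_singleton_le_iff_mem _ _).2 (mem_range_self T v₀))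
      (by rwa [finrank_span_singleton hv₀])
  refine ⟨(LinearEquiv.coord K W (T v₀) hv₀).toLinearMap ∘ₗ
    T.codRestrict _ (fun v => hspan ▸ mem_range_self T v), fun v => ?_⟩
  exact (LinearEquiv.coord_apply_smul K W (T v₀) hv₀ ⟨T v, _⟩).symm

section Graded

variable {𝕜 L : Type*} [Field 𝕜] [LieRing L] [LieAlgebra 𝕜 L] {g : ℕ → Submodule 𝕜 L}

theorem lie_mem_of_forall_lie_mem_graded_right (hsup : (⨆ i, g i) = ⊤)
    {N : Submodule 𝕜 L} {Y : L} (h : ∀ j, ∀ Z ∈ g j, ⁅Y, Z⁆ ∈ N) (Z : L) : ⁅Y, Z⁆ ∈ N := by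
  have : ⊤ ≤ N.comap (LieAlgebra.ad 𝕜 L Y) := hsup ▸ iSup_le fun j Z hZ => h j Z hZ
  exact this mem_top

theorem lie_mem_of_forall_lie_mem_graded (hsup : (⨆ i, g i) = ⊤)
    {N : Submodule 𝕜 L} (h : ∀ i j, ∀ Y ∈ g i, ∀ Z ∈ g j, ⁅Y, Z⁆ ∈ N) (Y Z : L) :
    ⁅Y, Z⁆ ∈ N := by
  have hleft : ∀ i, ∀ Y ∈ g i, ∀ Z, ⁅Y, Z⁆ ∈ N := fun i Y hY =>
    lie_mem_of_forall_lie_mem_graded_right hsup (h i · Y hY)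
  rw [← lie_skew, neg_mem_iff]
  exact lie_mem_of_forall_lie_mem_graded_right hsup
    (fun j Y hY => by rw [← lie_skew, neg_mem_iff]; exact hleft j Y hY Z) Y

theorem lie_mem_iSup_ne_one (hg0 : g 0 = ⊥) (hsup : (⨆ i, g i) = ⊤)
    (hbrk : ∀ i j, ∀ X ∈ g i, ∀ Y ∈ g j, ⁅X, Y⁆ ∈ g (i + j)) (Y Z : L) :
    ⁅Y, Z⁆ ∈ ⨆ j, ⨆ _ : j ≠ 1, g j := by
  refine lie_mem_of_forall_lie_mem_graded hsup (fun i j Y hY Z hZ => ?_) Y Z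
  rcases eq_or_ne (i + j) 1 with hij | hij
  · obtain ⟨rfl, -⟩ | ⟨-, rfl⟩ := Nat.add_eq_one_iff.mp hij
    · simp [show Y = 0 by simpa [hg0] using hY]
    · simp [show Z = 0 by simpa [hg0] using hZ]
  · exact le_iSup₂ (f := fun k (_ : k ≠ 1) => g k) (i + j) hij (hbrk i j Y hY Z hZ)

theorem lie_eq_zero_of_forall_lie_eq_zero_of_mem_one {s : ℕ}
    (hg0 : g 0 = ⊥) (hgtop : ∀ m, s < m → g m = ⊥) (hsup : (⨆ i, g i) = ⊤)
    (hgen : ∀ j, 1 ≤ j → j + 1 ≤ s →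
      g (j + 1) = span 𝕜 {Z | ∃ X ∈ g 1, ∃ Y ∈ g j, ⁅X, Y⁆ = Z})
    {X : L} (h : ∀ Y ∈ g 1, ⁅X, Y⁆ = 0) (Z : L) : ⁅X, Z⁆ = 0 := by
  have hgraded : ∀ j, ∀ Z ∈ g j, ⁅X, Z⁆ = 0 := by
    intro j
    induction j with
    | zero => simp [hg0]
    | succ k ih =>
      rcases Nat.eq_zero_or_pos k with rfl | hk
      · exact h
      by_cases hks : k + 1 ≤ s
      · intro Z hZ
        rw [hgen k hk hks] at hZ
        induction hZ using span_induction with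
        | mem z hz =>
          obtain ⟨a, ha, b, hb, rfl⟩ := hz
          rw [leibniz_lie, h a ha, ih b hb, zero_lie, lie_zero, add_zero]
        | zero => exact lie_zero X
        | add a b _ _ ha hb => rw [lie_add, ha, hb, add_zero]
        | smul c a _ ha => rw [lie_smul, ha, smul_zero]
      · simp [hgtop (k + 1) (by omega)]
  simpa using lie_mem_of_forall_lie_mem_graded_right (N := ⊥) hsup
    (fun j Z hZ => (mem_bot 𝕜).2 (hgraded j Z hZ)) Z

theorem smulRight_lie {f : L →ₗ[𝕜] 𝕜} {X : L} (hf : ∀ Y Z : L, f ⁅Y, Z⁆ = 0)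
    (hsym : ∀ Y Z : L, f Y • ⁅X, Z⁆ = f Z • ⁅X, Y⁆) (Y Z : L) :
    f.smulRight X ⁅Y, Z⁆ = ⁅f.smulRight X Y, Z⁆ + ⁅Y, f.smulRight X Z⁆ := by
  rw [smulRight_apply, smulRight_apply, smulRight_apply, hf, zero_smul, smul_lie, lie_smul,
    hsym, ← smul_add, ← lie_skew Y X, add_neg_cancel, smul_zero]

theorem exists_derivation_smulRight (hg0 : g 0 = ⊥) (hsup : (⨆ i, g i) = ⊤)
    (hbrk : ∀ i j, ∀ X ∈ g i, ∀ Y ∈ g j, ⁅X, Y⁆ ∈ g (i + j))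
    {X : L} (hX : X ∈ g 1) (hX0 : X ≠ 0) {f : L →ₗ[𝕜] 𝕜} (hf0 : f ≠ 0)
    (hfM : (⨆ j, ⨆ _ : j ≠ 1, g j) ≤ ker f) (hsym : ∀ Y Z : L, f Y • ⁅X, Z⁆ = f Z • ⁅X, Y⁆) :
    ∃ φ : L →ₗ[𝕜] L,
      (∀ Y Z : L, φ ⁅Y, Z⁆ = ⁅φ Y, Z⁆ + ⁅Y, φ Z⁆) ∧
      (∀ Y ∈ g 1, φ Y ∈ g 1) ∧
      (∀ j, 2 ≤ j → ∀ Y ∈ g j, φ Y = 0) ∧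
      Module.finrank 𝕜 (range φ) = 1 := by
  have hker : ∀ j ≠ 1, ∀ Y ∈ g j, f Y = 0 := fun j hj Y hY =>
    hfM (le_iSup₂ (f := fun k (_ : k ≠ 1) => g k) j hj hY)
  refine ⟨f.smulRight X, smulRight_lie (fun Y Z => hfM (lie_mem_iSup_ne_one hg0 hsup hbrk Y Z))
    hsym, fun Y _ => smul_mem _ _ hX, fun j hj Y hY => ?_, ?_⟩
  · rw [smulRight_apply, hker j (by omega) Y hY, zero_smul]
  · rw [range_smulRight_apply hf0, finrank_span_singleton hX0]

theorem exists_functional_lie_eq_smul [Module.Finite 𝕜 L] (hg0 : g 0 = ⊥) (hindep : iSupIndep g)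
    (hbrk : ∀ i j, ∀ X ∈ g i, ∀ Y ∈ g j, ⁅X, Y⁆ ∈ g (i + j))
    {X Y₀ : L} (hX : X ∈ g 1) (hY₀ : Y₀ ∈ g 1) (hXY₀ : ⁅X, Y₀⁆ ≠ 0)
    (had : Module.finrank 𝕜 (range (LieAlgebra.ad 𝕜 L X)) ≤ 1) :
    ∃ μ : L →ₗ[𝕜] 𝕜, μ ≠ 0 ∧ (⨆ j, ⨆ _ : j ≠ 1, g j) ≤ ker μ ∧
      ∀ Y, ⁅X, Y⁆ = μ Y • ⁅X, Y₀⁆ := by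
  obtain ⟨μ, hμ⟩ := exists_eq_smul_of_finrank_range_le_one had (v₀ := Y₀) hXY₀
  simp only [LieAlgebra.ad_apply] at hμ
  refine ⟨μ, fun h => hXY₀ (by simpa [h] using hμ Y₀), iSup₂_le fun j hj Z hZ => ?_, hμ⟩
  rcases eq_or_ne j 0 with rfl | hj0
  · simp [show Z = 0 by simpa [hg0] using hZ]
  have hmem₂ : ⁅X, Z⁆ ∈ g 2 := hμ Z ▸ smul_mem _ _ (hbrk 1 1 X hX Y₀ hY₀)
  have hzero : ⁅X, Z⁆ = 0 := disjoint_def.1 (hindep.pairwiseDisjoint (show 1 + j ≠ 2 by omega))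
    _ (hbrk 1 j X hX Z hZ) hmem₂
  rw [hμ Z, smul_eq_zero] at hzero
  exact hzero.resolve_right hXY₀

end Graded

theorem statement11_general {𝕜 L : Type*} [RCLike 𝕜] [LieRing L] [LieAlgebra 𝕜 L]
    [Module.Finite 𝕜 L]
    (s : ℕ) (g : ℕ → Submodule 𝕜 L)
    (hg0 : g 0 = ⊥) (hgtop : ∀ m, s < m → g m = ⊥)
    (hsup : (⨆ i, g i) = ⊤)
    (hindep : ∀ i, Disjoint (g i) (⨆ j, ⨆ _ : j ≠ i, g j))
    (hbrk : ∀ i j, ∀ X ∈ g i, ∀ Y ∈ g j, ⁅X, Y⁆ ∈ g (i + j))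
    (hgen : ∀ j, 1 ≤ j → j + 1 ≤ s →
      g (j + 1) = Submodule.span 𝕜 {Z | ∃ X ∈ g 1, ∃ Y ∈ g j, ⁅X, Y⁆ = Z})
    (X : L) (hX : X ∈ g 1) (hX0 : X ≠ 0)
    (had : Module.finrank 𝕜 (LinearMap.range (LieAlgebra.ad 𝕜 L X)) ≤ 1) :
    ∃ φ : L →ₗ[𝕜] L,
      (∀ Y Z : L, φ ⁅Y, Z⁆ = ⁅φ Y, Z⁆ + ⁅Y, φ Z⁆) ∧
      (∀ Y ∈ g 1, φ Y ∈ g 1) ∧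
      (∀ j, 2 ≤ j → j ≤ s → ∀ Y ∈ g j, φ Y = 0) ∧
      Module.finrank 𝕜 (LinearMap.range φ) = 1 := by
  suffices ∃ f : L →ₗ[𝕜] 𝕜, f ≠ 0 ∧ (⨆ j, ⨆ _ : j ≠ 1, g j) ≤ ker f ∧
      ∀ Y Z : L, f Y • ⁅X, Z⁆ = f Z • ⁅X, Y⁆ by
    obtain ⟨f, hf0, hfM, hsym⟩ := this
    obtain ⟨φ, hder, hφ₁, hφ, hrank⟩ :=
      exists_derivation_smulRight hg0 hsup hbrk hX hX0 hf0 hfM hsym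
    exact ⟨φ, hder, hφ₁, fun j hj _ => hφ j hj, hrank⟩
  by_cases hc : ∀ Y ∈ g 1, ⁅X, Y⁆ = 0
  · have hcentral := lie_eq_zero_of_forall_lie_eq_zero_of_mem_one hg0 hgtop hsup hgen hc
    have hXM : X ∉ ⨆ j, ⨆ _ : j ≠ 1, g j := fun h => hX0 (disjoint_def.1 (hindep 1) X hX h)
    obtain ⟨f, hfX, hfM⟩ := exists_le_ker_of_notMem hXM
    exact ⟨f, fun h => hfX (by simp [h]), hfM, fun Y Z => by simp [hcentral]⟩
  · push Not at hc
    obtain ⟨Y₀, hY₀, hXY₀⟩ := hc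
    obtain ⟨μ, hμ0, hμM, hμ⟩ := exists_functional_lie_eq_smul hg0 hindep hbrk hX hY₀ hXY₀ had
    exact ⟨μ, hμ0, hμM, fun Y Z => by rw [hμ Y, hμ Z, smul_comm]⟩

/-- Let `n = g_{−s} ⊕ ⋯ ⊕ g_{−1}` be a stratified nilpotent Lie algebra over `𝕜` (`ℝ` or
`ℂ`), encoded by subspaces `g i = g_{−i}` for `1 ≤ i ≤ s` (with `g 0 = ⊥` and `g m = ⊥`
for `m > s`).  If there exists a nonzero `X ∈ g_{−1}` such that `ad X` has rank at most
1, then `h₀(n)` contains a derivation of rank 1, i.e. a derivation `φ` with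
`φ(g_{−1}) ⊆ g_{−1}`, `φ(g_{−j}) = 0` for `2 ≤ j ≤ s`, and one-dimensional image. -/
theorem statement11 {𝕜 L : Type*} [RCLike 𝕜] [LieRing L] [LieAlgebra 𝕜 L]
    [Module.Finite 𝕜 L]
    (s : ℕ) (hs : 1 ≤ s) (g : ℕ → Submodule 𝕜 L)
    (hg0 : g 0 = ⊥) (hgtop : ∀ m, s < m → g m = ⊥)
    (hsup : (⨆ i, g i) = ⊤)
    (hindep : ∀ i, Disjoint (g i) (⨆ j, ⨆ _ : j ≠ i, g j))
    (hbrk : ∀ i j, ∀ X ∈ g i, ∀ Y ∈ g j, ⁅X, Y⁆ ∈ g (i + j))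
    (hgen : ∀ j, 1 ≤ j → j + 1 ≤ s →
      g (j + 1) = Submodule.span 𝕜 {Z | ∃ X ∈ g 1, ∃ Y ∈ g j, ⁅X, Y⁆ = Z})
    (X : L) (hX : X ∈ g 1) (hX0 : X ≠ 0)
    (had : Module.finrank 𝕜 (LinearMap.range (LieAlgebra.ad 𝕜 L X)) ≤ 1) :
    ∃ φ : L →ₗ[𝕜] L,
      (∀ Y Z : L, φ ⁅Y, Z⁆ = ⁅φ Y, Z⁆ + ⁅Y, φ Z⁆) ∧
      (∀ Y ∈ g 1, φ Y ∈ g 1) ∧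
      (∀ j, 2 ≤ j → j ≤ s → ∀ Y ∈ g j, φ Y = 0) ∧
      Module.finrank 𝕜 (LinearMap.range φ) = 1 :=
  statement11_general s g hg0 hgtop hsup hindep hbrk hgen X hX hX0 had
end

section
/- Let n = g_{−s} ⊕ ⋯ ⊕ g_{−1} be a stratified nilpotent Lie algebra over ℝ with dim g_{−1} = 2 and [g_{−1}, g_{−1}] ≠ {0}, and let ⟨·,·⟩ be an inner product on g_{−1}. Suppose φ ∈ h₀(n) is conformal on the first stratum, i.e. there exists λ ∈ ℝ with ⟨φX, Y⟩ + ⟨X, φY⟩ = λ⟨X, Y⟩ for all X, Y ∈ g_{−1}. Then λ = 0 and the restriction of φ to g_{−1} is skew-symmetric: ⟨φX, Y⟩ = −⟨X, φY⟩ for all X, Y ∈ g_{−1}. -/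
/-!
Since `φ` kills `g 2 ⊇ [g 1, g 1]`, the derivation rule gives `[φX, Y] + [X, φY] = 0` on the
first stratum; for `X, Y` with `[X, Y] ≠ 0` this says that `φ|g 1` is traceless. On the other
hand, in a `B`-orthogonal basis `X, Y` of `g 1` conformality forces both diagonal entries of
`φ|g 1` to be `λ / 2`, so its trace is `λ`, whence `λ = 0`.
-/

section LieAlgebra

variable {K L : Type*} [Field K] [LieRing L] [LieAlgebra K L]

theorem linearIndependent_pair_of_lie_ne_zero {X Y : L} (h : ⁅X, Y⁆ ≠ 0) :
    LinearIndependent K ![X, Y] := by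
  rw [LinearIndependent.pair_iff]
  intro s t hst
  have hsX : s • ⁅X, Y⁆ = 0 := by
    simpa [add_lie, smul_lie] using congrArg (⁅·, Y⁆) hst
  have htY : t • ⁅X, Y⁆ = 0 := by
    simpa [lie_add, lie_smul] using congrArg (⁅X, ·⁆) hst
  exact ⟨(smul_eq_zero.mp hsX).resolve_right h, (smul_eq_zero.mp htY).resolve_right h⟩

theorem lie_add_lie_smul_add_smul {X Y : L} {a b c d : K} :
    ⁅a • X + b • Y, Y⁆ + ⁅X, c • X + d • Y⁆ = (a + d) • ⁅X, Y⁆ := by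
  simp only [add_lie, lie_add, smul_lie, lie_smul, lie_self, smul_zero, add_zero, zero_add,
    add_smul]

end LieAlgebra

section Bilinear

variable {K V : Type*} [Field K] [AddCommGroup V] [Module K V]

theorem Submodule.exists_eq_add_of_finrank_eq_two {W : Submodule K V}
    (hW : Module.finrank K W = 2) {X Y : V} (hX : X ∈ W) (hY : Y ∈ W)
    (hXY : LinearIndependent K ![X, Y]) {v : V} (hv : v ∈ W) :
    ∃ a b : K, v = a • X + b • Y := by
  have : FiniteDimensional K W := Module.finite_of_finrank_eq_succ hW
  have hspan : span K {X, Y} = W := by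
    refine eq_of_le_of_finrank_eq (span_le.mpr ?_) ?_
    · rintro Z (rfl | rfl) <;> assumption
    · rw [hW, ← Matrix.range_cons_cons_empty, finrank_span_eq_card hXY, Fintype.card_fin]
  obtain ⟨a, b, hab⟩ := mem_span_pair.mp (hspan ▸ hv)
  exact ⟨a, b, hab.symm⟩

theorem two_mul_eq_of_apply_add_apply_eq (B : V →ₗ[K] V →ₗ[K] K) {X Y : V}
    (hXY : B X Y = 0) (hYX : B Y X = 0) (hX : B X X ≠ 0) {a b lam : K}
    (h : B (a • X + b • Y) X + B X (a • X + b • Y) = lam * B X X) : 2 * a = lam := by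
  simp only [map_add, map_smul, LinearMap.add_apply, LinearMap.smul_apply, smul_eq_mul,
    hXY, hYX, mul_zero, add_zero] at h
  exact mul_right_cancel₀ hX (by linear_combination h)

end Bilinear

theorem statement13_general {L : Type*} [LieRing L] [LieAlgebra ℝ L]
    (s : ℕ) (g : ℕ → Submodule ℝ L)
    (hgtop : ∀ m, s < m → g m = ⊥)
    (hbrk : ∀ i j, ∀ X ∈ g i, ∀ Y ∈ g j, ⁅X, Y⁆ ∈ g (i + j))
    (hdim : Module.finrank ℝ (g 1) = 2)
    (hnontriv : ∃ X ∈ g 1, ∃ Y ∈ g 1, ⁅X, Y⁆ ≠ 0)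
    (B : L →ₗ[ℝ] L →ₗ[ℝ] ℝ)
    (hBsymm : ∀ X ∈ g 1, ∀ Y ∈ g 1, B X Y = B Y X)
    (hBpos : ∀ X ∈ g 1, X ≠ 0 → 0 < B X X)
    (φ : L →ₗ[ℝ] L)
    (hder : ∀ X Y : L, φ ⁅X, Y⁆ = ⁅φ X, Y⁆ + ⁅X, φ Y⁆)
    (hφ1 : ∀ X ∈ g 1, φ X ∈ g 1)
    (hφ0 : ∀ j, 2 ≤ j → j ≤ s → ∀ X ∈ g j, φ X = 0)
    (lam : ℝ)
    (hconf : ∀ X ∈ g 1, ∀ Y ∈ g 1, B (φ X) Y + B X (φ Y) = lam * B X Y) :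
    lam = 0 ∧ ∀ X ∈ g 1, ∀ Y ∈ g 1, B (φ X) Y = -(B X (φ Y)) := by
  have hφ_lie : ∀ X ∈ g 1, ∀ Y ∈ g 1, ⁅φ X, Y⁆ + ⁅X, φ Y⁆ = 0 := by
    intro X hX Y hY
    rw [← hder]
    have hXY : ⁅X, Y⁆ ∈ g 2 := hbrk 1 1 X hX Y hY
    rcases le_or_gt 2 s with h2 | h2
    · exact hφ0 2 le_rfl h2 _ hXY
    · rw [hgtop 2 h2, Submodule.mem_bot] at hXY
      rw [hXY, map_zero]
  obtain ⟨X, hX, Y₀, hY₀, hXY₀⟩ := hnontriv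
  have hBX : B X X ≠ 0 := (hBpos X hX (by rintro rfl; simp at hXY₀)).ne'
  -- Gram–Schmidt: the component of `Y₀` orthogonal to `X` has the same bracket with `X`.
  set Y := Y₀ - (B X Y₀ / B X X) • X
  have hY : Y ∈ g 1 := sub_mem hY₀ (Submodule.smul_mem _ _ hX)
  have hXY : ⁅X, Y⁆ ≠ 0 := by simpa [Y, lie_sub, lie_smul] using hXY₀
  have hBY : B Y Y ≠ 0 := (hBpos Y hY (by rintro h; simp [h] at hXY)).ne'
  have hBXY : B X Y = 0 := by
    simp only [Y, map_sub, map_smul, smul_eq_mul]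
    field_simp
    ring
  have hBYX : B Y X = 0 := hBsymm X hX Y hY ▸ hBXY
  have hli : LinearIndependent ℝ ![X, Y] := linearIndependent_pair_of_lie_ne_zero hXY
  obtain ⟨a, b, hφX⟩ :=
    Submodule.exists_eq_add_of_finrank_eq_two hdim hX hY hli (hφ1 X hX)
  obtain ⟨d, c, hφY⟩ :=
    Submodule.exists_eq_add_of_finrank_eq_two hdim hY hX
      (LinearIndependent.pair_symm_iff.mp hli) (hφ1 Y hY)
  have ha : 2 * a = lam :=
    two_mul_eq_of_apply_add_apply_eq B hBXY hBYX hBX (hφX ▸ hconf X hX X hX)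
  have hd : 2 * d = lam :=
    two_mul_eq_of_apply_add_apply_eq B hBYX hBXY hBY (hφY ▸ hconf Y hY Y hY)
  have htrace : a + d = 0 := by
    have h := hφ_lie X hX Y hY
    rw [hφX, hφY, add_comm (d • Y), lie_add_lie_smul_add_smul] at h
    exact (smul_eq_zero.mp h).resolve_right hXY
  have hlam : lam = 0 := by linarith
  refine ⟨hlam, fun X hX Y hY => ?_⟩
  have h := hconf X hX Y hY
  rw [hlam, zero_mul] at h
  linarith

/-- Let `n = g_{−s} ⊕ ⋯ ⊕ g_{−1}` be a stratified nilpotent Lie algebra over `ℝ` with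
`dim g_{−1} = 2` and `[g_{−1}, g_{−1}] ≠ {0}`, and let `B` be an inner product on
`g_{−1}` (a bilinear form on `n` which is symmetric and positive definite on `g_{−1}`).
If `φ ∈ h₀(n)` is conformal on the first stratum, i.e.
`B(φX, Y) + B(X, φY) = λ B(X, Y)` for all `X, Y ∈ g_{−1}`, then `λ = 0` and the
restriction of `φ` to `g_{−1}` is skew-symmetric. -/
theorem statement13 {L : Type*} [LieRing L] [LieAlgebra ℝ L] [Module.Finite ℝ L]
    (s : ℕ) (hs : 1 ≤ s) (g : ℕ → Submodule ℝ L)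
    (hg0 : g 0 = ⊥) (hgtop : ∀ m, s < m → g m = ⊥)
    (hsup : (⨆ i, g i) = ⊤)
    (hindep : ∀ i, Disjoint (g i) (⨆ j, ⨆ _ : j ≠ i, g j))
    (hbrk : ∀ i j, ∀ X ∈ g i, ∀ Y ∈ g j, ⁅X, Y⁆ ∈ g (i + j))
    (hgen : ∀ j, 1 ≤ j → j + 1 ≤ s →
      g (j + 1) = Submodule.span ℝ {Z | ∃ X ∈ g 1, ∃ Y ∈ g j, ⁅X, Y⁆ = Z})
    (hdim : Module.finrank ℝ (g 1) = 2)
    (hnontriv : ∃ X ∈ g 1, ∃ Y ∈ g 1, ⁅X, Y⁆ ≠ 0)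
    (B : L →ₗ[ℝ] L →ₗ[ℝ] ℝ)
    (hBsymm : ∀ X ∈ g 1, ∀ Y ∈ g 1, B X Y = B Y X)
    (hBpos : ∀ X ∈ g 1, X ≠ 0 → 0 < B X X)
    (φ : L →ₗ[ℝ] L)
    (hder : ∀ X Y : L, φ ⁅X, Y⁆ = ⁅φ X, Y⁆ + ⁅X, φ Y⁆)
    (hφ1 : ∀ X ∈ g 1, φ X ∈ g 1)
    (hφ0 : ∀ j, 2 ≤ j → j ≤ s → ∀ X ∈ g j, φ X = 0)
    (lam : ℝ)
    (hconf : ∀ X ∈ g 1, ∀ Y ∈ g 1, B (φ X) Y + B X (φ Y) = lam * B X Y) :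
    lam = 0 ∧ ∀ X ∈ g 1, ∀ Y ∈ g 1, B (φ X) Y = -(B X (φ Y)) :=
  statement13_general s g hgtop hbrk hdim hnontriv B hBsymm hBpos φ hder hφ1 hφ0 lam hconf
end

section
/- Under the contact and conformality conditions on the Heisenberg group, the function g satisfies the third-order identities X̃₂X̃₁²g = −3·X̃₁²X̃₂g and X̃₁X̃₂²g = −3·X̃₂²X̃₁g everywhere on ℝ³. -/
/-- The left-invariant vector field `X̃₁ = ∂/∂x₁` of the 3-dimensional Heisenberg group,
acting on functions of `(x₁, x₂, y) ∈ ℝ³`. -/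
noncomputable def Xone (u : ℝ × ℝ × ℝ → ℝ) (p : ℝ × ℝ × ℝ) : ℝ :=
  fderiv ℝ u p (1, 0, 0)

/-- The left-invariant vector field `X̃₂ = ∂/∂x₂ + x₁ ∂/∂y` of the Heisenberg group. -/
noncomputable def Xtwo (u : ℝ × ℝ × ℝ → ℝ) (p : ℝ × ℝ × ℝ) : ℝ :=
  fderiv ℝ u p (0, 1, 0) + p.1 * fderiv ℝ u p (0, 0, 1)

/-- The left-invariant vector field `Ỹ = ∂/∂y` of the Heisenberg group. -/
noncomputable def Yvf (u : ℝ × ℝ × ℝ → ℝ) (p : ℝ × ℝ × ℝ) : ℝ :=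
  fderiv ℝ u p (0, 0, 1)

lemma smoothD {u : ℝ × ℝ × ℝ → ℝ} (hu : ContDiff ℝ (⊤ : ℕ∞) u) (v : ℝ × ℝ × ℝ) :
    ContDiff ℝ (⊤ : ℕ∞) fun p => fderiv ℝ u p v :=
  (hu.fderiv_right (by simp)).clm_apply contDiff_const

lemma diffD {u : ℝ × ℝ × ℝ → ℝ} (hu : ContDiff ℝ (⊤ : ℕ∞) u) (v : ℝ × ℝ × ℝ) :
    Differentiable ℝ fun p => fderiv ℝ u p v :=
  (smoothD hu v).differentiable (by simp)

lemma D_comm {u : ℝ × ℝ × ℝ → ℝ} (hu : ContDiff ℝ (⊤ : ℕ∞) u) (v w p : ℝ × ℝ × ℝ) :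
    fderiv ℝ (fun q => fderiv ℝ u q w) p v = fderiv ℝ (fun q => fderiv ℝ u q v) p w := by
  have hd : DifferentiableAt ℝ (fderiv ℝ u) p :=
    ((hu.fderiv_right (m := (⊤ : ℕ∞)) (by simp)).differentiable (by simp)).differentiableAt
  have h1 : ∀ z y : ℝ × ℝ × ℝ, fderiv ℝ (fun q => fderiv ℝ u q z) p y
      = fderiv ℝ (fderiv ℝ u) p y z := by
    intro z y
    rw [fderiv_clm_apply hd (differentiableAt_const z)]
    simp
  rw [h1, h1]
  exact (hu.contDiffAt.isSymmSndFDerivAt (by rw [minSmoothness_of_isRCLikeNormedField]; exact WithTop.coe_le_coe.mpr (le_top : (2 : ℕ∞) ≤ ⊤))) v w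

lemma fderiv_fst_mul {w : ℝ × ℝ × ℝ → ℝ} {p : ℝ × ℝ × ℝ} (hw : DifferentiableAt ℝ w p)
    (v : ℝ × ℝ × ℝ) :
    fderiv ℝ (fun q => q.1 * w q) p v = v.1 * w p + p.1 * fderiv ℝ w p v := by
  have h1 : HasFDerivAt (fun q : ℝ × ℝ × ℝ => q.1)
      (ContinuousLinearMap.fst ℝ ℝ (ℝ × ℝ)) p := hasFDerivAt_fst
  have h2 := (h1.mul hw.hasFDerivAt).fderiv
  rw [show (fun q : ℝ × ℝ × ℝ => q.1 * w q) = (fun q => q.1) * w from rfl, h2]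
  simp
  ring

lemma smooth_Xtwo {u : ℝ × ℝ × ℝ → ℝ} (hu : ContDiff ℝ (⊤ : ℕ∞) u) : ContDiff ℝ (⊤ : ℕ∞) (Xtwo u) := by
  unfold Xtwo
  exact (smoothD hu _).add ((contDiff_fst).mul (smoothD hu _))

lemma Xone_neg (u : ℝ × ℝ × ℝ → ℝ) (p : ℝ × ℝ × ℝ) :
    Xone (fun q => -(u q)) p = -(Xone u p) := by
  unfold Xone; rw [fderiv_fun_neg]; simp

lemma Xtwo_neg (u : ℝ × ℝ × ℝ → ℝ) (p : ℝ × ℝ × ℝ) :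
    Xtwo (fun q => -(u q)) p = -(Xtwo u p) := by
  unfold Xtwo; rw [fderiv_fun_neg]; simp; ring

lemma Yvf_neg (u : ℝ × ℝ × ℝ → ℝ) (p : ℝ × ℝ × ℝ) :
    Yvf (fun q => -(u q)) p = -(Yvf u p) := by
  unfold Yvf; rw [fderiv_fun_neg]; simp

lemma Xone_const_mul {u : ℝ × ℝ × ℝ → ℝ} (hu : Differentiable ℝ u) (c : ℝ) (p : ℝ × ℝ × ℝ) :
    Xone (fun q => c * u q) p = c * Xone u p := by
  unfold Xone; rw [fderiv_const_mul (hu p) c]; simp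

lemma Xtwo_const_mul {u : ℝ × ℝ × ℝ → ℝ} (hu : Differentiable ℝ u) (c : ℝ) (p : ℝ × ℝ × ℝ) :
    Xtwo (fun q => c * u q) p = c * Xtwo u p := by
  unfold Xtwo; rw [fderiv_const_mul (hu p) c]; simp; ring

lemma comm12 {u : ℝ × ℝ × ℝ → ℝ} (hu : ContDiff ℝ (⊤ : ℕ∞) u) (p : ℝ × ℝ × ℝ) :
    Xone (Xtwo u) p = Xtwo (Xone u) p + Yvf u p := by
  have d2 : DifferentiableAt ℝ (fun q => fderiv ℝ u q (0, 1, 0)) p := diffD hu _ p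
  have d3 : Differentiable ℝ (fun q => fderiv ℝ u q ((0:ℝ), (0:ℝ), (1:ℝ))) := diffD hu _
  have dmul : DifferentiableAt ℝ (fun q : ℝ × ℝ × ℝ => q.1 * fderiv ℝ u q (0, 0, 1)) p :=
    differentiableAt_fst.mul (d3 p)
  unfold Xone Xtwo Yvf
  rw [fderiv_fun_add d2 dmul, ContinuousLinearMap.add_apply,
    fderiv_fst_mul (d3 p) (1, 0, 0),
    D_comm hu (1, 0, 0) (0, 1, 0) p, D_comm hu (1, 0, 0) (0, 0, 1) p]
  simp
  ring

lemma comm13 {u : ℝ × ℝ × ℝ → ℝ} (hu : ContDiff ℝ (⊤ : ℕ∞) u) (p : ℝ × ℝ × ℝ) :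
    Xone (Yvf u) p = Yvf (Xone u) p := by
  unfold Xone Yvf
  exact D_comm hu (1, 0, 0) (0, 0, 1) p

lemma comm23 {u : ℝ × ℝ × ℝ → ℝ} (hu : ContDiff ℝ (⊤ : ℕ∞) u) (p : ℝ × ℝ × ℝ) :
    Xtwo (Yvf u) p = Yvf (Xtwo u) p := by
  have d2 : DifferentiableAt ℝ (fun q => fderiv ℝ u q (0, 1, 0)) p := diffD hu _ p
  have d3 : Differentiable ℝ (fun q => fderiv ℝ u q ((0:ℝ), (0:ℝ), (1:ℝ))) := diffD hu _
  have dmul : DifferentiableAt ℝ (fun q : ℝ × ℝ × ℝ => q.1 * fderiv ℝ u q (0, 0, 1)) p :=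
    differentiableAt_fst.mul (d3 p)
  unfold Xtwo Yvf
  rw [fderiv_fun_add d2 dmul, ContinuousLinearMap.add_apply,
    fderiv_fst_mul (d3 p) (0, 0, 1),
    D_comm hu (0, 0, 1) (0, 1, 0) p]
  simp

/-- Under the contact and conformality conditions on the Heisenberg group, the third-order identities `X̃₂X̃₁²g = −3 X̃₁²X̃₂g` and `X̃₁X̃₂²g = −3 X̃₂²X̃₁g` hold everywhere on ℝ³. -/
theorem statement16 (f₁ f₂ g : ℝ × ℝ × ℝ → ℝ)
    (hf₁ : ContDiff ℝ (⊤ : ℕ∞) f₁) (hf₂ : ContDiff ℝ (⊤ : ℕ∞) f₂) (hg : ContDiff ℝ (⊤ : ℕ∞) g)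
    (hcontact₁ : ∀ p, Xone g p = -f₂ p) (hcontact₂ : ∀ p, Xtwo g p = f₁ p)
    (hconf₁ : ∀ p, Xone f₁ p = Xtwo f₂ p) (hconf₂ : ∀ p, Xtwo f₁ p = -(Xone f₂ p)) :
    ∀ p, Xtwo (Xone (Xone g)) p = -(3 * Xone (Xone (Xtwo g)) p) ∧ Xone (Xtwo (Xtwo g)) p = -(3 * Xtwo (Xtwo (Xone g)) p) := by
  have Eg1 : Xone g = fun q => -(f₂ q) := funext hcontact₁
  have Eg2 : Xtwo g = f₁ := funext hcontact₂
  have Ec1 : Xone f₁ = Xtwo f₂ := funext hconf₁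
  have Ec2 : Xtwo f₁ = fun q => -(Xone f₂ q) := funext hconf₂
  have dXtwof₂ : Differentiable ℝ (Xtwo f₂) := (smooth_Xtwo hf₂).differentiable (by simp)
  have dXonef₁ : Differentiable ℝ (Xone f₁) := diffD hf₁ (1, 0, 0)
  have hY2 : ∀ p, Yvf g p = 2 * Xtwo f₂ p := by
    intro p
    have h := comm12 hg p
    rw [Eg2, Eg1, Xtwo_neg] at h
    have h2 := hconf₁ p
    linarith
  have hY1 : ∀ p, Yvf g p = 2 * Xone f₁ p := by
    intro p; rw [hY2 p, hconf₁ p]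
  have EY2 : Yvf g = fun q => 2 * Xtwo f₂ q := funext hY2
  have EY1 : Yvf g = fun q => 2 * Xone f₁ q := funext hY1
  have hYf₂ : ∀ p, Yvf f₂ p = -(2 * Xone (Xone f₁) p) := by
    intro p
    have h := comm13 hg p
    rw [EY1, Eg1, Xone_const_mul dXonef₁ 2 p, Yvf_neg] at h
    linarith
  have hYf₁ : ∀ p, Yvf f₁ p = 2 * Xtwo (Xtwo f₂) p := by
    intro p
    have h := comm23 hg p
    rw [EY2, Eg2, Xtwo_const_mul dXtwof₂ 2 p] at h
    linarith
  intro p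
  constructor
  · have E11 : Xone (Xone g) = fun q => -(Xone f₂ q) := by
      rw [Eg1]; exact funext fun q => Xone_neg f₂ q
    rw [E11, Xtwo_neg, Eg2]
    have h := comm12 hf₂ p
    rw [← Ec1] at h
    have h2 := hYf₂ p
    linarith
  · have E21 : Xtwo (Xone g) = fun q => -(Xtwo f₂ q) := by
      rw [Eg1]; exact funext fun q => Xtwo_neg f₂ q
    rw [E21, Xtwo_neg, Eg2, Ec2, Xone_neg]
    have h := comm12 hf₁ p
    rw [Ec2, Ec1, Xone_neg] at h
    have h2 := hYf₁ p
    linarith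
end

section
/- Under the contact and conformality conditions on the Heisenberg group, the function g satisfies X̃₁³g = (3/2)·ỸX̃₂g and X̃₂X̃₁²g = −(3/2)·ỸX̃₁g everywhere on ℝ³. -/
noncomputable def Dd (v : ℝ × ℝ × ℝ) (u : ℝ × ℝ × ℝ → ℝ) (p : ℝ × ℝ × ℝ) : ℝ :=
  fderiv ℝ u p v

lemma Dd_smooth {u : ℝ × ℝ × ℝ → ℝ} (hu : ContDiff ℝ (⊤ : ℕ∞) u) (v : ℝ × ℝ × ℝ) :
    ContDiff ℝ (⊤ : ℕ∞) (Dd v u) :=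
  (hu.fderiv_right ((by simp))).clm_apply contDiff_const

lemma Dd_symm {u : ℝ × ℝ × ℝ → ℝ} (hu : ContDiff ℝ (⊤ : ℕ∞) u) (v w p : ℝ × ℝ × ℝ) :
    Dd v (Dd w u) p = Dd w (Dd v u) p := by
  have hsymm : IsSymmSndFDerivAt ℝ u p :=
    (hu.contDiffAt).isSymmSndFDerivAt (by rw [minSmoothness_of_isRCLikeNormedField]; exact WithTop.coe_le_coe.mpr le_top)
  have hd : DifferentiableAt ℝ (fderiv ℝ u) p :=
    ((hu.fderiv_right (m := 1) (WithTop.coe_le_coe.mpr le_top)).differentiable one_ne_zero) p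
  have e : ∀ z : ℝ × ℝ × ℝ, fderiv ℝ (fun q => fderiv ℝ u q z) p
      = (fderiv ℝ (fderiv ℝ u) p).flip z := by
    intro z
    have := fderiv_clm_apply (c := fderiv ℝ u) (u := fun _ => z) hd (differentiableAt_const z)
    simpa using this
  show fderiv ℝ (fun q => fderiv ℝ u q w) p v = fderiv ℝ (fun q => fderiv ℝ u q v) p w
  rw [e w, e v]
  exact hsymm v w

lemma Dd_add {u w : ℝ × ℝ × ℝ → ℝ} {p : ℝ × ℝ × ℝ} (hu : DifferentiableAt ℝ u p)
    (hw : DifferentiableAt ℝ w p) (v : ℝ × ℝ × ℝ) :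
    Dd v (fun q => u q + w q) p = Dd v u p + Dd v w p := by
  simp [Dd, fderiv_fun_add hu hw]

lemma Dd_const_mul {u : ℝ × ℝ × ℝ → ℝ} {p : ℝ × ℝ × ℝ} (hu : DifferentiableAt ℝ u p)
    (c : ℝ) (v : ℝ × ℝ × ℝ) :
    Dd v (fun q => c * u q) p = c * Dd v u p := by
  simp [Dd, fderiv_const_mul hu c]

lemma Dd_x1_mul {u : ℝ × ℝ × ℝ → ℝ} {p : ℝ × ℝ × ℝ} (hu : DifferentiableAt ℝ u p)
    (v : ℝ × ℝ × ℝ) :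
    Dd v (fun q => q.1 * u q) p = v.1 * u p + p.1 * Dd v u p := by
  have h1 : DifferentiableAt ℝ (fun q : ℝ × ℝ × ℝ => q.1) p := differentiableAt_fst
  show fderiv ℝ (fun q : ℝ × ℝ × ℝ => q.1 * u q) p v = _
  rw [fderiv_fun_mul h1 hu]
  have : fderiv ℝ (fun q : ℝ × ℝ × ℝ => q.1) p v = v.1 := by
    have : (fun q : ℝ × ℝ × ℝ => q.1) = Prod.fst := rfl
    rw [this, fderiv_fst]
    rfl
  simp [this, Dd]
  ring

def ve1 : ℝ × ℝ × ℝ := (1, 0, 0)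
def ve2 : ℝ × ℝ × ℝ := (0, 1, 0)
def ve3 : ℝ × ℝ × ℝ := (0, 0, 1)

lemma Dd_combo3 {h k m : ℝ × ℝ × ℝ → ℝ} (hh : ContDiff ℝ (⊤ : ℕ∞) h) (hk : ContDiff ℝ (⊤ : ℕ∞) k)
    (hm : ContDiff ℝ (⊤ : ℕ∞) m) (a b c : ℝ) (v p : ℝ × ℝ × ℝ) :
    Dd v (fun q => a * h q + b * (q.1 * k q) + c * (q.1 * (q.1 * m q))) p
      = a * Dd v h p + b * (v.1 * k p + p.1 * Dd v k p)
        + c * (v.1 * (p.1 * m p) + p.1 * (v.1 * m p + p.1 * Dd v m p)) := by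
  have Hh := hh.differentiable (by simp)
  have Hk := hk.differentiable (by simp)
  have Hm := hm.differentiable (by simp)
  have Hxk : Differentiable ℝ (fun q : ℝ × ℝ × ℝ => q.1 * k q) := differentiable_fst.mul Hk
  have Hxm : Differentiable ℝ (fun q : ℝ × ℝ × ℝ => q.1 * m q) := differentiable_fst.mul Hm
  have Hxxm : Differentiable ℝ (fun q : ℝ × ℝ × ℝ => q.1 * (q.1 * m q)) :=
    differentiable_fst.mul Hxm
  rw [Dd_add (((Hh.const_mul a).fun_add (Hxk.const_mul b)) p) ((Hxxm.const_mul c) p),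
      Dd_add ((Hh.const_mul a) p) ((Hxk.const_mul b) p),
      Dd_const_mul (Hh p), Dd_const_mul ((Hxk) p), Dd_const_mul ((Hxxm) p),
      Dd_x1_mul (Hk p), Dd_x1_mul ((Hxm) p), Dd_x1_mul (Hm p)]

/-- Under the contact and conformality conditions on the Heisenberg group, `X̃₁³g = (3/2) ỸX̃₂g` and `X̃₂X̃₁²g = −(3/2) ỸX̃₁g` everywhere on ℝ³. -/
theorem statement17 (f₁ f₂ g : ℝ × ℝ × ℝ → ℝ)
    (hf₁ : ContDiff ℝ (⊤ : ℕ∞) f₁) (hf₂ : ContDiff ℝ (⊤ : ℕ∞) f₂) (hg : ContDiff ℝ (⊤ : ℕ∞) g)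
    (hcontact₁ : ∀ p, Xone g p = -f₂ p) (hcontact₂ : ∀ p, Xtwo g p = f₁ p)
    (hconf₁ : ∀ p, Xone f₁ p = Xtwo f₂ p) (hconf₂ : ∀ p, Xtwo f₁ p = -(Xone f₂ p)) :
    ∀ p, Xone (Xone (Xone g)) p = (3 / 2) * Yvf (Xtwo g) p ∧ Xtwo (Xone (Xone g)) p = -((3 / 2) * Yvf (Xone g) p) := by
  -- smoothness of partial derivatives
  have s1 := Dd_smooth hg ve1
  have s2 := Dd_smooth hg ve2
  have s3 := Dd_smooth hg ve3
  have s13 := Dd_smooth s3 ve1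
  have s22 := Dd_smooth s2 ve2
  have s23 := Dd_smooth s3 ve2
  have s33 := Dd_smooth s3 ve3
  -- f₁ and f₂ in terms of g, in the shape of `Dd_combo3`
  have hf1e : f₁ = fun q => (1 : ℝ) * Dd ve2 g q + 1 * (q.1 * Dd ve3 g q)
      + 0 * (q.1 * (q.1 * g q)) := by
    funext q
    have h : Dd ve2 g q + q.1 * Dd ve3 g q = f₁ q := hcontact₂ q
    linarith
  have hf2e : f₂ = fun q => (-1 : ℝ) * Dd ve1 g q + 0 * (q.1 * g q)
      + 0 * (q.1 * (q.1 * g q)) := by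
    funext q
    have h : Dd ve1 g q = -f₂ q := hcontact₁ q
    linarith
  -- expansion of derivatives of f₁, f₂
  have Ef1 : ∀ (v p' : ℝ × ℝ × ℝ), Dd v f₁ p'
      = 1 * Dd v (Dd ve2 g) p' + 1 * (v.1 * Dd ve3 g p' + p'.1 * Dd v (Dd ve3 g) p')
        + 0 * (v.1 * (p'.1 * g p') + p'.1 * (v.1 * g p' + p'.1 * Dd v g p')) := by
    intro v p'
    rw [hf1e]
    exact Dd_combo3 s2 s3 hg 1 1 0 v p'
  have Ef2 : ∀ (v p' : ℝ × ℝ × ℝ), Dd v f₂ p'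
      = (-1) * Dd v (Dd ve1 g) p' + 0 * (v.1 * g p' + p'.1 * Dd v g p')
        + 0 * (v.1 * (p'.1 * g p') + p'.1 * (v.1 * g p' + p'.1 * Dd v g p')) := by
    intro v p'
    rw [hf2e]
    exact Dd_combo3 s1 hg hg (-1) 0 0 v p'
  -- second-order identity A
  have hA : ∀ q, Dd ve1 (Dd ve2 g) q = (-(1/2) : ℝ) * Dd ve3 g q
      + (-1) * (q.1 * Dd ve1 (Dd ve3 g) q) + 0 * (q.1 * (q.1 * g q)) := by
    intro q
    have h : Dd ve1 f₁ q = Dd ve2 f₂ q + q.1 * Dd ve3 f₂ q := hconf₁ q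
    rw [Ef1 ve1 q, Ef2 ve2 q, Ef2 ve3 q, Dd_symm hg ve2 ve1, Dd_symm hg ve3 ve1] at h
    simp only [ve1, ve2, ve3] at h ⊢
    linear_combination (1/2) * h
  -- second-order identity B
  have hB : ∀ q, Dd ve1 (Dd ve1 g) q = (1 : ℝ) * Dd ve2 (Dd ve2 g) q
      + 2 * (q.1 * Dd ve2 (Dd ve3 g) q) + 1 * (q.1 * (q.1 * Dd ve3 (Dd ve3 g) q)) := by
    intro q
    have h : Dd ve2 f₁ q + q.1 * Dd ve3 f₁ q = -(Dd ve1 f₂ q) := hconf₂ q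
    rw [Ef1 ve2 q, Ef1 ve3 q, Ef2 ve1 q, Dd_symm hg ve3 ve2] at h
    simp only [ve1, ve2, ve3] at h ⊢
    linear_combination -h
  -- differentiate A and B
  have hAfun : Dd ve1 (Dd ve2 g) = fun q => (-(1/2) : ℝ) * Dd ve3 g q
      + (-1) * (q.1 * Dd ve1 (Dd ve3 g) q) + 0 * (q.1 * (q.1 * g q)) := funext hA
  have hBfun : Dd ve1 (Dd ve1 g) = fun q => (1 : ℝ) * Dd ve2 (Dd ve2 g) q
      + 2 * (q.1 * Dd ve2 (Dd ve3 g) q) + 1 * (q.1 * (q.1 * Dd ve3 (Dd ve3 g) q)) := funext hB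
  have hAv : ∀ (v p' : ℝ × ℝ × ℝ), Dd v (Dd ve1 (Dd ve2 g)) p'
      = (-(1/2)) * Dd v (Dd ve3 g) p'
        + (-1) * (v.1 * Dd ve1 (Dd ve3 g) p' + p'.1 * Dd v (Dd ve1 (Dd ve3 g)) p')
        + 0 * (v.1 * (p'.1 * g p') + p'.1 * (v.1 * g p' + p'.1 * Dd v g p')) := by
    intro v p'
    rw [hAfun]
    exact Dd_combo3 s3 s13 hg (-(1/2)) (-1) 0 v p'
  have hBv : ∀ (v p' : ℝ × ℝ × ℝ), Dd v (Dd ve1 (Dd ve1 g)) p'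
      = 1 * Dd v (Dd ve2 (Dd ve2 g)) p'
        + 2 * (v.1 * Dd ve2 (Dd ve3 g) p' + p'.1 * Dd v (Dd ve2 (Dd ve3 g)) p')
        + 1 * (v.1 * (p'.1 * Dd ve3 (Dd ve3 g) p')
          + p'.1 * (v.1 * Dd ve3 (Dd ve3 g) p' + p'.1 * Dd v (Dd ve3 (Dd ve3 g)) p')) := by
    intro v p'
    rw [hBfun]
    exact Dd_combo3 s22 s23 s33 1 2 1 v p'
  -- inner swaps
  have hiswap23 : Dd ve3 (Dd ve2 g) = Dd ve2 (Dd ve3 g) := funext fun q => Dd_symm hg ve3 ve2 q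
  have hiswap12 : Dd ve2 (Dd ve1 g) = Dd ve1 (Dd ve2 g) := funext fun q => Dd_symm hg ve2 ve1 q
  have hiswap13 : Dd ve3 (Dd ve1 g) = Dd ve1 (Dd ve3 g) := funext fun q => Dd_symm hg ve3 ve1 q
  have hXtwog : Xtwo g = fun q => (1 : ℝ) * Dd ve2 g q + 1 * (q.1 * Dd ve3 g q)
      + 0 * (q.1 * (q.1 * g q)) := by
    funext q
    show Dd ve2 g q + q.1 * Dd ve3 g q = _
    ring
  intro p
  constructor
  · show Dd ve1 (Dd ve1 (Dd ve1 g)) p = (3/2) * Dd ve3 (Xtwo g) p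
    rw [hXtwog, Dd_combo3 s2 s3 hg 1 1 0 ve3 p, Dd_symm hg ve3 ve2 p]
    have h1 := hBv ve1 p
    have h2 := hAv ve2 p
    have h3 := hAv ve3 p
    rw [Dd_symm s2 ve2 ve1 p, Dd_symm s3 ve2 ve1 p] at h2
    rw [Dd_symm s2 ve3 ve1 p, Dd_symm s3 ve3 ve1 p, hiswap23] at h3
    simp only [ve1, ve2, ve3] at h1 h2 h3 ⊢
    linear_combination h1 + h2 + p.1 * h3
  · show Dd ve2 (Dd ve1 (Dd ve1 g)) p + p.1 * Dd ve3 (Dd ve1 (Dd ve1 g)) p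
      = -((3/2) * Dd ve3 (Dd ve1 g) p)
    rw [Dd_symm s1 ve2 ve1 p, Dd_symm s1 ve3 ve1 p, hiswap12, hiswap13]
    have h := hAv ve1 p
    simp only [ve1, ve2, ve3] at h ⊢
    linear_combination h
end
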